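/- For the asymmetric random walk with 0 < q < p, p + q = 1, whose starting point X_0 is chosen uniformly at random from T_N = {0,1,…,N}, for any fixed β ∈ (0,1), the probability that the site ⌊βN⌋ is visited before the exit time τ_N converges to β as N → ∞. -/

import Mathlib

open Filter Topology

/-- Position of the nearest-neighbor walk after the steps `w` (`true` = one step right,
`false` = one step left), started from `x`. -/
def walkPos (x : ℤ) (w : List Bool) : ℤ :=
  x + (w.count true : ℤ) - (w.count false : ℤ)

/-- `w` is the step sequence of a trajectory on `{0, 1, …, N}` started at `x` and run
exactly until the exit time `τ_N = T_0 ∧ T_N`: all positions strictly before the last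
step lie strictly inside `(0, N)`, and the final position is `0` or `N`. -/
def IsExitPath (N : ℕ) (x : ℤ) (w : List Bool) : Prop :=
  (∀ k < w.length, 0 < walkPos x (w.take k) ∧ walkPos x (w.take k) < (N : ℤ)) ∧
    (walkPos x w = 0 ∨ walkPos x w = (N : ℤ))

/-- Probability weight of the step sequence `w` when each step goes right with
probability `p` and left with probability `1 - p`, independently. -/
noncomputable def wt (p : ℝ) (w : List Bool) : ℝ :=
  p ^ w.count true * (1 - p) ^ w.count false

/-- `prob N p x S` is the probability, for the walk on `{0, …, N}` with right-step
probability `p` started at `x` and stopped at the exit time `τ_N`, that its stopped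
trajectory (recorded as the step sequence up to time `τ_N`) satisfies `S`. -/
noncomputable def prob (N : ℕ) (p : ℝ) (x : ℤ) (S : List Bool → Prop) : ℝ :=
  ∑' w : List Bool, Set.indicator {w | IsExitPath N x w ∧ S w} (wt p) w

/-- Expectation of `f` of the stopped trajectory for the walk started at `x`. -/
noncomputable def expect (N : ℕ) (p : ℝ) (x : ℤ) (f : List Bool → ℝ) : ℝ :=
  ∑' w : List Bool, Set.indicator {w | IsExitPath N x w} (fun w => wt p w * f w) w

/-- Probability for the walk whose starting point is uniformly distributed on
`{0, 1, …, N}`; the event `S` may depend on the starting point. -/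
noncomputable def probUniform (N : ℕ) (p : ℝ) (S : ℤ → List Bool → Prop) : ℝ :=
  (∑ x ∈ Finset.range (N + 1), prob N p (x : ℤ) (S (x : ℤ))) / (N + 1)

/-- The set of sites visited by the stopped walk up to time `τ_N` (time `0` included). -/
def rangeSet (x : ℤ) (w : List Bool) : Finset ℤ :=
  (Finset.range (w.length + 1)).image fun k => walkPos x (w.take k)

/-- The range `R_N`: the number of distinct sites visited up to the exit time. -/
def rangeCount (x : ℤ) (w : List Bool) : ℕ := (rangeSet x w).card

/-- The local time `G(y) = Σ_{k=0}^{τ_N} 1_{X_k = y}` of the stopped trajectory `w`. -/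
def localTime (x y : ℤ) (w : List Bool) : ℕ :=
  ((Finset.range (w.length + 1)).filter fun k => walkPos x (w.take k) = y).card

/-- The event `T_y < τ_N`: the walk started at `x` visits `y` at some time
`k ≥ 1` strictly before the end of the stopped trajectory `w`. -/
def hitsBefore (x y : ℤ) (w : List Bool) : Prop :=
  ∃ k, 1 ≤ k ∧ k < w.length ∧ walkPos x (w.take k) = y

/-!
The exit paths from a site form a prefix-free set of step sequences, so by Kraft's inequality
their weights are summable with total mass at most `1`; conditioning on the first step
makes `n ↦ P_n(b visited)` harmonic for the walk away from `0`, `b` and `N`. With `ρ = q / p < 1`,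
harmonic functions on an interval are determined by their boundary values and spanned by `1` and
`ρ ^ n`, which gives `(1 - ρ ^ n) / (1 - ρ ^ b)` below `b` and `(ρ ^ n - ρ ^ N) / (ρ ^ b - ρ ^ N)`
above `b`. Hence the visit probability is `1` up to a geometric error below `b` and decays
geometrically above it, so summing over the starting point gives `⌊βN⌋ + O(1)`.
-/
open Finset

section PathWeights

variable {p : ℝ}

lemma wt_nil : wt p [] = 1 := by simp [wt]

lemma wt_cons (c : Bool) (w : List Bool) :
    wt p (c :: w) = (if c then p else 1 - p) * wt p w := by
  cases c <;> simp [wt, pow_succ] <;> ring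

lemma wt_nonneg (hp0 : 0 ≤ p) (hp1 : p ≤ 1) (w : List Bool) : 0 ≤ wt p w :=
  mul_nonneg (pow_nonneg hp0 _) (pow_nonneg (sub_nonneg.2 hp1) _)

def IsPrefixFree {α : Type*} (s : Set (List α)) : Prop :=
  ∀ v ∈ s, ∀ w ∈ s, v <+: w → v = w

lemma IsPrefixFree.mono {α : Type*} {s t : Set (List α)} (ht : IsPrefixFree t) (hst : s ⊆ t) :
    IsPrefixFree s :=
  fun v hv w hw => ht v (hst hv) w (hst hw)

lemma sum_eq_sum_cons_true_add_sum_cons_false {M : Type*} [AddCommMonoid M] (f : List Bool → M)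
    {s : Finset (List Bool)} (hs : [] ∉ s) :
    ∑ w ∈ s, f w = ∑ t ∈ s.preimage (List.cons true) List.cons_injective.injOn, f (true :: t) +
      ∑ t ∈ s.preimage (List.cons false) List.cons_injective.injOn, f (false :: t) := by
  classical
  let g : Bool → List Bool → M := fun c w => if w.head? = some c then f w else 0
  have hg (c : Bool) : ∑ t ∈ s.preimage (List.cons c) List.cons_injective.injOn, f (c :: t) =
      ∑ w ∈ s, g c w := by
    rw [← sum_preimage (List.cons c) s List.cons_injective.injOn (g c)]
    · simp [g]
    · rintro (_ | ⟨d, t⟩) _ hw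
      · simp [g]
      · simp only [g, List.head?_cons, Option.some.injEq, ite_eq_right_iff]
        rintro rfl
        exact absurd ⟨t, rfl⟩ hw
  rw [hg, hg, ← sum_add_distrib]
  refine sum_congr rfl fun w hw => ?_
  rcases w with _ | ⟨_ | _, t⟩
  · exact absurd hw hs
  all_goals simp [g]

theorem sum_wt_le_one_of_isPrefixFree (hp0 : 0 ≤ p) (hp1 : p ≤ 1) {s : Finset (List Bool)}
    (hs : IsPrefixFree (s : Set (List Bool))) : ∑ w ∈ s, wt p w ≤ 1 := by
  suffices key : ∀ L (s : Finset (List Bool)), (∀ w ∈ s, w.length < L) →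
      IsPrefixFree (s : Set (List Bool)) → ∑ w ∈ s, wt p w ≤ 1 from
    key _ s (fun w hw => Nat.lt_succ_of_le (le_sup (f := List.length) hw)) hs
  intro L
  induction L with
  | zero =>
    intro s hlen _
    rw [eq_empty_of_forall_notMem fun w hw => Nat.not_lt_zero _ (hlen w hw)]
    simp
  | succ L ih =>
    intro s hlen hs
    by_cases hnil : [] ∈ s
    · have hsub : s ⊆ {[]} := fun w hw => mem_singleton.2 (hs _ hnil _ hw List.nil_prefix).symm
      calc ∑ w ∈ s, wt p w ≤ ∑ w ∈ {[]}, wt p w :=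
            sum_le_sum_of_subset_of_nonneg hsub fun w _ _ => wt_nonneg hp0 hp1 w
        _ = 1 := by simp [wt_nil]
    · have htail (c : Bool) :
          ∑ t ∈ s.preimage (List.cons c) List.cons_injective.injOn, wt p t ≤ 1 :=
        ih _ (fun t ht => by simpa using hlen _ (mem_preimage.1 ht))
          fun v hv w hw hvw => List.cons_injective
            (hs _ (mem_preimage.1 hv) _ (mem_preimage.1 hw) ((List.prefix_cons_inj c).2 hvw))
      rw [sum_eq_sum_cons_true_add_sum_cons_false _ hnil]
      simp only [wt_cons, if_true, Bool.false_eq_true, if_false, ← mul_sum]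
      nlinarith [htail true, htail false]

end PathWeights

section ExitPaths

variable {N : ℕ} {x : ℤ} {p : ℝ}

lemma walkPos_nil : walkPos x [] = x := by simp [walkPos]

lemma walkPos_cons (c : Bool) (w : List Bool) :
    walkPos x (c :: w) = walkPos (x + if c then 1 else -1) w := by
  cases c <;> simp [walkPos] <;> ring

lemma isPrefixFree_isExitPath : IsPrefixFree {w | IsExitPath N x w} := by
  intro v hv w hw hvw
  refine hvw.eq_of_length (hvw.length_le.antisymm (not_lt.1 fun hlt => ?_))
  have hinside := hw.1 v.length hlt
  rw [← List.prefix_iff_eq_take.1 hvw] at hinside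
  rcases hv.2 with h | h <;> omega

lemma isExitPath_cons (hx0 : 0 < x) (hxN : x < N) (c : Bool) (w : List Bool) :
    IsExitPath N x (c :: w) ↔ IsExitPath N (x + if c then 1 else -1) w := by
  simp only [IsExitPath, List.length_cons, walkPos_cons, Nat.forall_lt_succ_left,
    List.take_zero, List.take_succ_cons, walkPos_nil]
  tauto

lemma isExitPath_iff_eq_nil (hx : x = 0 ∨ x = N) {w : List Bool} :
    IsExitPath N x w ↔ w = [] := by
  refine ⟨fun hw => ?_, fun hw => ?_⟩
  · rcases w with _ | ⟨c, w⟩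
    · rfl
    · have := hw.1 0 (Nat.zero_lt_succ _)
      rw [List.take_zero, walkPos_nil] at this
      omega
  · subst hw
    exact ⟨fun k hk => absurd hk (Nat.not_lt_zero k), by rwa [walkPos_nil]⟩

lemma sum_indicator_isExitPath_le_one (hp0 : 0 ≤ p) (hp1 : p ≤ 1) (S : List Bool → Prop)
    (u : Finset (List Bool)) :
    ∑ w ∈ u, {w | IsExitPath N x w ∧ S w}.indicator (wt p) w ≤ 1 := by
  classical
  rw [sum_indicator_eq_sum_filter]
  exact sum_wt_le_one_of_isPrefixFree hp0 hp1
    (isPrefixFree_isExitPath.mono fun w hw => (mem_filter.1 hw).2.1)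

lemma summable_indicator_isExitPath (hp0 : 0 ≤ p) (hp1 : p ≤ 1) (S : List Bool → Prop) :
    Summable ({w | IsExitPath N x w ∧ S w}.indicator (wt p)) :=
  summable_of_sum_le (fun w => Set.indicator_nonneg (fun w _ => wt_nonneg hp0 hp1 w) w)
    (sum_indicator_isExitPath_le_one hp0 hp1 S)

lemma prob_nonneg (hp0 : 0 ≤ p) (hp1 : p ≤ 1) (S : List Bool → Prop) : 0 ≤ prob N p x S :=
  tsum_nonneg fun w => Set.indicator_nonneg (fun w _ => wt_nonneg hp0 hp1 w) w

lemma prob_le_one (hp0 : 0 ≤ p) (hp1 : p ≤ 1) (S : List Bool → Prop) : prob N p x S ≤ 1 :=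
  Real.tsum_le_of_sum_le (fun w => Set.indicator_nonneg (fun w _ => wt_nonneg hp0 hp1 w) w)
    (sum_indicator_isExitPath_le_one hp0 hp1 S)

lemma tsum_eq_tsum_cons_true_add_tsum_cons_false {α : Type*} [AddCommGroup α] [UniformSpace α]
    [IsUniformAddGroup α] [CompleteSpace α] [T0Space α] {f : List Bool → α} (hf : Summable f)
    (hnil : f [] = 0) :
    ∑' w, f w = ∑' t, f (true :: t) + ∑' t, f (false :: t) := by
  have hinj : Function.Injective fun ct : Bool × List Bool => ct.1 :: ct.2 := by
    rintro ⟨c, t⟩ ⟨d, u⟩ h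
    simpa using h
  have hsupp : Function.support f ⊆ Set.range fun ct : Bool × List Bool => ct.1 :: ct.2 := by
    rintro (_ | ⟨c, t⟩) hw
    · exact absurd hnil hw
    · exact ⟨(c, t), rfl⟩
  rw [← hinj.tsum_eq hsupp]
  exact ((hf.comp_injective hinj).tsum_prod).trans ((tsum_bool _).trans (add_comm _ _))

theorem prob_eq_first_step (hp0 : 0 ≤ p) (hp1 : p ≤ 1) (hx0 : 0 < x) (hxN : x < N)
    (S : List Bool → Prop) :
    prob N p x S = p * prob N p (x + 1) (fun w => S (true :: w)) +
      (1 - p) * prob N p (x - 1) (fun w => S (false :: w)) := by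
  have hnil : {w | IsExitPath N x w ∧ S w}.indicator (wt p) [] = 0 := by
    refine Set.indicator_of_notMem (fun h => ?_) _
    rcases h.1.2 with h | h <;> rw [walkPos_nil] at h <;> omega
  have hstep (c : Bool) (w : List Bool) :
      {w | IsExitPath N x w ∧ S w}.indicator (wt p) (c :: w) = (if c then p else 1 - p) *
        {w | IsExitPath N (x + if c then 1 else -1) w ∧ S (c :: w)}.indicator (wt p) w := by
    classical
    simp only [Set.indicator_apply, Set.mem_ofPred_eq, isExitPath_cons hx0 hxN, wt_cons, mul_ite,
      mul_zero]
  rw [prob, tsum_eq_tsum_cons_true_add_tsum_cons_false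
    (summable_indicator_isExitPath hp0 hp1 S) hnil]
  simp only [hstep, if_true, Bool.false_eq_true, if_false, tsum_mul_left, ← sub_eq_add_neg]
  rfl

open Classical in
lemma prob_of_boundary (hx : x = 0 ∨ x = N) (S : List Bool → Prop) :
    prob N p x S = if S [] then 1 else 0 := by
  rw [prob, tsum_eq_single []]
  · by_cases h : S [] <;> simp [h, isExitPath_iff_eq_nil hx, wt_nil]
  · intro w hw
    simp [isExitPath_iff_eq_nil hx, hw]

end ExitPaths

def IsHarmonicOn (p : ℝ) (f : ℕ → ℝ) (a c : ℕ) : Prop :=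
  ∀ x, a < x → x < c → f x = p * f (x + 1) + (1 - p) * f (x - 1)

namespace IsHarmonicOn

variable {p : ℝ} {f g : ℕ → ℝ} {a c : ℕ}

lemma sub (hf : IsHarmonicOn p f a c) (hg : IsHarmonicOn p g a c) :
    IsHarmonicOn p (f - g) a c := fun x hax hxc => by
  simp only [Pi.sub_apply, hf x hax hxc, hg x hax hxc]
  ring

/-- The increments of a harmonic function are geometric with ratio `(1 - p) / p`, so vanishing
at both ends forces the first increment, hence the function, to vanish. -/
theorem eq_zero (hp0 : 0 < p) (hp1 : p ≤ 1) (hf : IsHarmonicOn p f a c) (ha : f a = 0)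
    (hc : f c = 0) {x : ℕ} (hax : a ≤ x) (hxc : x ≤ c) : f x = 0 := by
  set ρ := (1 - p) / p
  have hρ : p * ρ = 1 - p := mul_div_cancel₀ _ hp0.ne'
  set Δ := f (a + 1) - f a
  have hincr (k : ℕ) (hk : a + k < c) : f (a + k + 1) - f (a + k) = ρ ^ k * Δ := by
    induction k with
    | zero => simp [Δ]
    | succ k ih =>
      have h := hf (a + k + 1) (by omega) hk
      rw [Nat.add_sub_cancel] at h
      rw [pow_succ, mul_right_comm, ← ih (by omega), ← add_assoc, mul_comm]
      apply mul_left_cancel₀ hp0.ne'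
      linear_combination -h - (f (a + k + 1) - f (a + k)) * hρ
  have hval (k : ℕ) (hk : a + k ≤ c) : f (a + k) = (∑ j ∈ range k, ρ ^ j) * Δ := by
    induction k with
    | zero => simpa using ha
    | succ k ih =>
      rw [sum_range_succ, add_mul, ← ih (by omega), ← hincr k (by omega), ← add_assoc]
      ring
  obtain rfl | hac := (hax.trans hxc).eq_or_lt
  · rwa [le_antisymm hxc hax]
  have hΔ : Δ = 0 := by
    have hsum : 0 < ∑ j ∈ range (c - a), ρ ^ j :=
      sum_pos' (fun j _ => pow_nonneg (div_nonneg (sub_nonneg.2 hp1) hp0.le) j)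
        ⟨0, mem_range.2 (by omega), by simp⟩
    have := hval (c - a) (by omega)
    rw [Nat.add_sub_cancel' hac.le, hc] at this
    exact (mul_eq_zero.1 this.symm).resolve_left hsum.ne'
  simpa [hΔ, Nat.add_sub_cancel' hax] using hval (x - a) (by omega)

lemma eq_of_boundary (hp0 : 0 < p) (hp1 : p ≤ 1) (hf : IsHarmonicOn p f a c)
    (hg : IsHarmonicOn p g a c) (ha : f a = g a) (hc : f c = g c) {x : ℕ} (hax : a ≤ x)
    (hxc : x ≤ c) : f x = g x :=
  sub_eq_zero.1 <| (hf.sub hg).eq_zero hp0 hp1 (sub_eq_zero.2 ha) (sub_eq_zero.2 hc) hax hxc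

end IsHarmonicOn

lemma isHarmonicOn_const_add_mul_pow {p : ℝ} (hp : p ≠ 0) (A B : ℝ) (a c : ℕ) :
    IsHarmonicOn p (fun x => A + B * ((1 - p) / p) ^ x) a c := by
  have hρ : p * ((1 - p) / p) ^ 2 + (1 - p) = (1 - p) / p := by
    field_simp
    ring
  rintro (_ | x) hax -
  · omega
  rw [Nat.add_sub_cancel]
  linear_combination (-B * ((1 - p) / p) ^ x) * hρ

section Visits

variable {N : ℕ} {p : ℝ}

lemma prob_true_eq_one (hp0 : 0 < p) (hp1 : p ≤ 1) {n : ℕ} (hn : n ≤ N) :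
    prob N p n (fun _ => True) = 1 := by
  refine IsHarmonicOn.eq_of_boundary (f := fun n : ℕ => prob N p n fun _ => True) (g := 1)
    hp0 hp1 ?_ (fun _ _ _ => by simp) ?_ ?_ (Nat.zero_le n) hn
  · intro x hx0 hxN
    simpa [Nat.cast_pred hx0] using
      prob_eq_first_step hp0.le hp1 (N := N) (Nat.cast_pos.2 hx0) (Nat.cast_lt.2 hxN) _
  all_goals simp [prob_of_boundary]

noncomputable def visitProb (N : ℕ) (p : ℝ) (y x : ℤ) : ℝ :=
  prob N p x fun w => y ∈ rangeSet x w

lemma mem_rangeSet_self (x : ℤ) (w : List Bool) : x ∈ rangeSet x w :=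
  mem_image.2 ⟨0, by simp, walkPos_nil⟩

lemma mem_rangeSet_cons {x y : ℤ} (c : Bool) (w : List Bool) :
    y ∈ rangeSet x (c :: w) ↔ y = x ∨ y ∈ rangeSet (x + if c then 1 else -1) w := by
  simp only [rangeSet, mem_image, mem_range, List.length_cons, Nat.exists_lt_succ_left,
    List.take_zero, List.take_succ_cons, walkPos_nil, walkPos_cons]
  tauto

lemma visitProb_self (hp0 : 0 < p) (hp1 : p ≤ 1) {n : ℕ} (hn : n ≤ N) :
    visitProb N p n n = 1 := by
  simpa [visitProb, mem_rangeSet_self] using prob_true_eq_one hp0 hp1 hn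

lemma visitProb_of_boundary {x y : ℤ} (hx : x = 0 ∨ x = N) (hxy : x ≠ y) :
    visitProb N p y x = 0 := by
  simp [visitProb, prob_of_boundary hx, rangeSet, walkPos_nil, hxy]

theorem visitProb_eq_first_step (hp0 : 0 ≤ p) (hp1 : p ≤ 1) {x y : ℤ} (hx0 : 0 < x)
    (hxN : x < N) (hxy : x ≠ y) :
    visitProb N p y x = p * visitProb N p y (x + 1) + (1 - p) * visitProb N p y (x - 1) := by
  simp only [visitProb, prob_eq_first_step hp0 hp1 hx0 hxN, mem_rangeSet_cons, hxy.symm,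
    false_or, if_true, Bool.false_eq_true, if_false, ← sub_eq_add_neg]

lemma isHarmonicOn_visitProb (hp0 : 0 ≤ p) (hp1 : p ≤ 1) {a b c : ℕ} (hcN : c ≤ N)
    (hb : b ≤ a ∨ c ≤ b) : IsHarmonicOn p (fun n : ℕ => visitProb N p b n) a c := by
  intro x hax hxc
  simpa [Nat.cast_pred (by omega : 0 < x)] using
    visitProb_eq_first_step hp0 hp1 (N := N) (y := b) (Nat.cast_pos.2 (by omega))
      (Nat.cast_lt.2 (by omega)) (Nat.cast_injective.ne (by omega))

end Visits

section HittingFormulas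

variable {N : ℕ} {p : ℝ} {b n : ℕ}

lemma one_sub_div_ne_one (hp0 : 0 < p) (hp : p ≠ 1 / 2) : (1 - p) / p ≠ 1 := by
  rw [Ne, div_eq_one_iff_eq hp0.ne']
  contrapose! hp
  linarith

theorem visitProb_of_le (hp0 : 0 < p) (hp1 : p < 1) (hp : p ≠ 1 / 2) (hb : 0 < b) (hbN : b ≤ N)
    (hn : n ≤ b) :
    visitProb N p b n = (1 - ((1 - p) / p) ^ n) / (1 - ((1 - p) / p) ^ b) := by
  set ρ := (1 - p) / p
  have hD : 1 - ρ ^ b ≠ 0 := by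
    rw [sub_ne_zero, ne_comm, Ne, pow_eq_one_iff_of_nonneg (by positivity) hb.ne']
    exact one_sub_div_ne_one hp0 hp
  have hg : IsHarmonicOn p (fun n : ℕ => (1 - ρ ^ n) / (1 - ρ ^ b)) 0 b := by
    convert isHarmonicOn_const_add_mul_pow hp0.ne' (1 - ρ ^ b)⁻¹ (-(1 - ρ ^ b)⁻¹) 0 b using 2
    ring
  refine IsHarmonicOn.eq_of_boundary hp0 hp1.le
    (isHarmonicOn_visitProb hp0.le hp1.le hbN (Or.inr le_rfl)) hg ?_ ?_ (Nat.zero_le n) hn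
  · simpa using visitProb_of_boundary (N := N) (p := p) (Or.inl rfl) (by omega : (0 : ℤ) ≠ b)
  · simp [visitProb_self hp0 hp1.le hbN, hD]

theorem visitProb_of_ge (hp0 : 0 < p) (hp1 : p < 1) (hp : p ≠ 1 / 2) (hbN : b < N) (hbn : b ≤ n)
    (hn : n ≤ N) :
    visitProb N p b n =
      (((1 - p) / p) ^ n - ((1 - p) / p) ^ N) / (((1 - p) / p) ^ b - ((1 - p) / p) ^ N) := by
  set ρ := (1 - p) / p
  have hD : ρ ^ b - ρ ^ N ≠ 0 :=
    sub_ne_zero.2 ((pow_right_injective₀ (by positivity) (one_sub_div_ne_one hp0 hp)).ne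
      hbN.ne)
  have hg : IsHarmonicOn p (fun n : ℕ => (ρ ^ n - ρ ^ N) / (ρ ^ b - ρ ^ N)) b N := by
    convert isHarmonicOn_const_add_mul_pow hp0.ne' (-ρ ^ N / (ρ ^ b - ρ ^ N))
      (ρ ^ b - ρ ^ N)⁻¹ b N using 2
    ring
  refine IsHarmonicOn.eq_of_boundary hp0 hp1.le
    (isHarmonicOn_visitProb hp0.le hp1.le le_rfl (Or.inl le_rfl)) hg ?_ ?_ hbn hn
  · simp [visitProb_self hp0 hp1.le hbN.le, hD]
  · simpa using visitProb_of_boundary (N := N) (p := p) (Or.inr rfl) (by omega : (N : ℤ) ≠ b)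

end HittingFormulas

section Bounds

variable {N : ℕ} {p : ℝ} {b n : ℕ}

lemma one_sub_pow_le_visitProb (hp : 1 / 2 < p) (hp1 : p < 1) (hb : 0 < b) (hbN : b ≤ N)
    (hn : n ≤ b) : 1 - ((1 - p) / p) ^ n ≤ visitProb N p b n := by
  have hρ0 : 0 ≤ (1 - p) / p := by positivity
  have hρ1 : (1 - p) / p < 1 := by rw [div_lt_one (by linarith)]; linarith
  rw [visitProb_of_le (by linarith) hp1 hp.ne' hb hbN hn, le_div_iff₀ (by
    linarith [pow_lt_one₀ hρ0 hρ1 hb.ne'])]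
  nlinarith [pow_le_one₀ (n := n) hρ0 hρ1.le, pow_nonneg hρ0 b]

lemma visitProb_le_pow_sub (hp : 1 / 2 < p) (hp1 : p < 1) (hbN : b < N) (hbn : b ≤ n)
    (hn : n ≤ N) : visitProb N p b n ≤ ((1 - p) / p) ^ (n - b) := by
  set ρ := (1 - p) / p
  have hρ0 : 0 < ρ := by positivity
  have hρ1 : ρ < 1 := by rw [div_lt_one (by linarith)]; linarith
  rw [visitProb_of_ge (by linarith) hp1 hp.ne' hbN hbn hn,
    div_le_iff₀ (sub_pos.2 (pow_lt_pow_right_of_lt_one₀ hρ0 hρ1 hbN)), ← pow_sub_mul_pow ρ hbn]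
  nlinarith [pow_le_one₀ (n := n - b) hρ0.le hρ1.le, pow_nonneg hρ0.le N]

theorem abs_sum_visitProb_sub_le (hp : 1 / 2 < p) (hp1 : p < 1) (hb : 0 < b) (hbN : b < N) :
    |∑ n ∈ range (N + 1), visitProb N p b n - (b + 1)| ≤ (1 - (1 - p) / p)⁻¹ := by
  set ρ := (1 - p) / p
  have hρ0 : 0 < ρ := by positivity
  have hρ1 : ρ < 1 := by rw [div_lt_one (by linarith)]; linarith
  have hgeom (m : ℕ) : ∑ k ∈ range m, ρ ^ k ≤ (1 - ρ)⁻¹ := by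
    simpa [← range_eq_Ico] using geom_sum_Ico_le_of_lt_one (m := 0) (n := m) hρ0.le hρ1
  have hinit_ge : (b + 1 : ℝ) - (1 - ρ)⁻¹ ≤ ∑ n ∈ range (b + 1), visitProb N p b n :=
    calc (b + 1 : ℝ) - (1 - ρ)⁻¹ ≤ ∑ n ∈ range (b + 1), (1 - ρ ^ n) := by
          simp only [sum_sub_distrib, sum_const, card_range, nsmul_one, Nat.cast_succ]
          linarith [hgeom (b + 1)]
      _ ≤ _ := sum_le_sum fun n hn =>
          one_sub_pow_le_visitProb hp hp1 hb hbN.le (Nat.lt_succ_iff.1 (mem_range.1 hn))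
  have hinit_le : ∑ n ∈ range (b + 1), visitProb N p b n ≤ b + 1 :=
    (sum_le_sum fun n _ => prob_le_one (by linarith) hp1.le _).trans (by simp)
  have htail_ge : 0 ≤ ∑ n ∈ Ico (b + 1) (N + 1), visitProb N p b n :=
    sum_nonneg fun n _ => prob_nonneg (by linarith) hp1.le _
  have htail_le : ∑ n ∈ Ico (b + 1) (N + 1), visitProb N p b n ≤ (1 - ρ)⁻¹ := by
    rw [sum_Ico_eq_sum_range]
    refine (sum_le_sum fun k hk => ?_).trans (hgeom _)
    calc visitProb N p b ↑(b + 1 + k) ≤ ρ ^ (b + 1 + k - b) :=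
          visitProb_le_pow_sub hp hp1 hbN (by omega) (by simp at hk; omega)
      _ ≤ ρ ^ k := pow_le_pow_of_le_one hρ0.le hρ1.le (by omega)
  rw [← sum_range_add_sum_Ico _ (by omega : b + 1 ≤ N + 1), abs_le]
  constructor <;> linarith

end Bounds

lemma tendsto_div_natCast_add_one_of_abs_sub_le {a : ℕ → ℝ} {β C : ℝ}
    (h : ∀ᶠ N in atTop, |a N - β * N| ≤ C) :
    Tendsto (fun N : ℕ => a N / (N + 1)) atTop (𝓝 β) := by
  have hlim (c : ℝ) : Tendsto (fun N : ℕ => (β * N + c) / (N + 1)) atTop (𝓝 β) := by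
    have := ((tendsto_natCast_div_add_atTop (1 : ℝ)).const_mul β).add
      (tendsto_one_div_add_atTop_nhds_zero_nat.const_mul c)
    rw [mul_one, mul_zero, add_zero] at this
    refine this.congr fun N => ?_
    field_simp
  refine tendsto_of_tendsto_of_tendsto_of_le_of_le' (hlim (-C)) (hlim C) ?_ ?_ <;>
    filter_upwards [h] with N hN <;>
    gcongr <;> linarith [abs_le.1 hN]

lemma eventually_floor_mul_pos_and_lt {β : ℝ} (hβ0 : 0 < β) (hβ1 : β < 1) :
    ∀ᶠ N : ℕ in atTop, 0 < ⌊β * N⌋₊ ∧ ⌊β * N⌋₊ < N := by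
  filter_upwards [eventually_ge_atTop ⌈β⁻¹⌉₊, eventually_gt_atTop 0] with N hN hN0
  have hβN : β⁻¹ ≤ N := Nat.ceil_le.1 hN
  refine ⟨Nat.floor_pos.2 ?_, (Nat.floor_lt (by positivity)).2 ?_⟩
  · calc (1 : ℝ) = β * β⁻¹ := (mul_inv_cancel₀ hβ0.ne').symm
      _ ≤ β * N := by gcongr
  · exact mul_lt_of_lt_one_left (Nat.cast_pos.2 hN0) hβ1

/-- Remark 1.3 (asymmetric case): for the walk with fixed `0 < q < p`, `p + q = 1`,
started uniformly at random on `{0, …, N}`, the probability that `⌊βN⌋` is visited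
before exit tends to `β`. -/
theorem point_visited_uniform_asymmetric (p q β : ℝ) (hq : 0 < q) (hpq : q < p)
    (hsum : p + q = 1) (hβ0 : 0 < β) (hβ1 : β < 1) :
    Tendsto (fun N : ℕ => probUniform N p
        fun x w => (⌊β * (N : ℝ)⌋ : ℤ) ∈ rangeSet x w)
      atTop (𝓝 β) := by
  have hp : 1 / 2 < p := by linarith
  have hp1 : p < 1 := by linarith
  show Tendsto (fun N : ℕ => (∑ x ∈ range (N + 1), visitProb N p ⌊β * N⌋ x) / (N + 1)) atTop (𝓝 β)
  refine tendsto_div_natCast_add_one_of_abs_sub_le (C := (1 - (1 - p) / p)⁻¹ + 1) ?_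
  filter_upwards [eventually_floor_mul_pos_and_lt hβ0 hβ1] with N ⟨hb, hbN⟩
  have hβN : 0 ≤ β * N := by positivity
  have hfloor : |(⌊β * N⌋₊ + 1 : ℝ) - β * N| ≤ 1 :=
    abs_le.2 ⟨by linarith [Nat.lt_floor_add_one (β * N)], by linarith [Nat.floor_le hβN]⟩
  rw [← Int.natCast_floor_eq_floor hβN]
  calc _ ≤ _ := abs_sub_le _ ((⌊β * N⌋₊ : ℝ) + 1) _
    _ ≤ _ := add_le_add (abs_sum_visitProb_sub_le hp hp1 hb hbN) hfloor
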